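/- Let Ω ⊂ ℝ^d be a compact set with Lebesgue measure |Ω| > 0, and for each N let X_N = (x_1^{(N)},…,x_N^{(N)}) be an N-tuple of points of Ω such that the sequence (X_N) is asymptotically uniformly distributed in Ω. Let κ_A, κ_B : Ω × Ω → ℝ be continuous and define κ_C(x,y) := ∫_Ω κ_A(x,z) κ_B(z,y) dz. Then the discrete convolutions converge uniformly to κ_C, i.e., sup_{(x,y) ∈ Ω×Ω} | κ_C(x,y) − (|Ω|/N) Σ_{k=1}^N κ_A(x, x_k^{(N)}) κ_B(x_k^{(N)}, y) | → 0 as N → ∞. -/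

import Mathlib

/-!
With `G p z := κA p.1 z * κB z p.2`, the discrete convolution at `p` is a sum of values of the
section `G p` with total weight `|Ω|`. Since `G` is uniformly continuous on the compact set
`(Ω × Ω) × Ω`, these sums are equicontinuous in `p`, uniformly in `N`. Uniform distribution gives
convergence at each `p`, and on a compact set pointwise convergence of an equicontinuous family is
uniform.
-/

open MeasureTheory Filter Topology

theorem EquicontinuousOn.tendstoUniformlyOn_of_tendsto {ι X α : Type*} [TopologicalSpace X]
    [UniformSpace α] {F : ι → X → α} {f : X → α} {K : Set X} {l : Filter ι}
    (hK : IsCompact K) (hF : EquicontinuousOn F K) (h : ∀ x ∈ K, Tendsto (F · x) l (𝓝 (f x))) :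
    TendstoUniformlyOn F f l K := by
  have := (EquicontinuousOn.tendsto_uniformOnFun_iff_pi' (𝔖 := {K}) (by simpa) (by simpa) l f).2
    (by rw [Set.sUnion_singleton, tendsto_pi_nhds]; exact fun x ↦ h x x.2)
  exact UniformOnFun.tendsto_iff_tendstoUniformlyOn.1 this K rfl

section WeightedSums

variable {P Z : Type*} [PseudoMetricSpace P] [PseudoMetricSpace Z] {K : Set P} {Ω : Set Z}

theorem IsCompact.exists_forall_dist_lt_of_continuousOn_prod {E : Type*} [PseudoMetricSpace E]
    (hK : IsCompact K) (hΩ : IsCompact Ω) {G : P → Z → E}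
    (hG : ContinuousOn (Function.uncurry G) (K ×ˢ Ω)) {ε : ℝ} (hε : 0 < ε) :
    ∃ δ > 0, ∀ p ∈ K, ∀ q ∈ K, dist p q < δ → ∀ z ∈ Ω, dist (G p z) (G q z) < ε := by
  obtain ⟨δ, hδ, hG⟩ := Metric.uniformContinuousOn_iff.1
    ((hK.prod hΩ).uniformContinuousOn_of_continuous hG) ε hε
  refine ⟨δ, hδ, fun p hp q hq hpq z hz ↦ hG (p, z) ⟨hp, hz⟩ (q, z) ⟨hq, hz⟩ ?_⟩
  simpa [Prod.dist_eq] using hpq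

variable {G : P → Z → ℝ} {c : ℕ → ℝ} {C : ℝ} {x : (N : ℕ) → Fin N → Z}

theorem IsCompact.uniformEquicontinuousOn_mul_sum (hK : IsCompact K) (hΩ : IsCompact Ω)
    (hG : ContinuousOn (Function.uncurry G) (K ×ˢ Ω)) (hc : ∀ N, |c N| * N ≤ C)
    (hx : ∀ N k, x N k ∈ Ω) :
    UniformEquicontinuousOn (fun N p ↦ c N * ∑ k, G p (x N k)) K := by
  rw [(Metric.uniformity_basis_dist.inf_principal (K ×ˢ K)).uniformEquicontinuousOn_iff
    Metric.uniformity_basis_dist]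
  intro ε hε
  have hC : 0 ≤ C := by simpa using hc 0
  obtain ⟨δ, hδ, hGδ⟩ := hK.exists_forall_dist_lt_of_continuousOn_prod hΩ hG
    (div_pos hε (by linarith : (0 : ℝ) < C + 1))
  refine ⟨δ, hδ, fun p q ⟨hpq, hp, hq⟩ N ↦ ?_⟩
  calc dist (c N * ∑ k, G p (x N k)) (c N * ∑ k, G q (x N k))
      = |c N| * dist (∑ k, G p (x N k)) (∑ k, G q (x N k)) := by
        rw [← smul_eq_mul, ← smul_eq_mul, dist_smul₀, Real.norm_eq_abs]
    _ ≤ |c N| * ∑ _k : Fin N, ε / (C + 1) := by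
        gcongr
        exact dist_sum_sum_le_of_le _ fun k _ ↦ (hGδ p hp q hq hpq _ (hx N k)).le
    _ = |c N| * N * (ε / (C + 1)) := by simp [mul_assoc]
    _ ≤ C * (ε / (C + 1)) := by gcongr; exact hc N
    _ < ε := by rw [mul_div_assoc', div_lt_iff₀ (by linarith)]; nlinarith

theorem IsCompact.tendstoUniformlyOn_mul_sum (hK : IsCompact K) (hΩ : IsCompact Ω)
    (hG : ContinuousOn (Function.uncurry G) (K ×ˢ Ω)) (hc : ∀ N, |c N| * N ≤ C)
    (hx : ∀ N k, x N k ∈ Ω) {l : Filter ℕ} {I : (Z → ℝ) → ℝ}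
    (hI : ∀ f, ContinuousOn f Ω → Tendsto (fun N ↦ c N * ∑ k, f (x N k)) l (𝓝 (I f))) :
    TendstoUniformlyOn (fun N p ↦ c N * ∑ k, G p (x N k)) (fun p ↦ I (G p)) l K :=
  (hK.uniformEquicontinuousOn_mul_sum hΩ hG hc hx).equicontinuousOn.tendstoUniformlyOn_of_tendsto
    hK fun p hp ↦ hI _ (hG.comp (f := fun z ↦ (p, z)) (by fun_prop) fun _ hz ↦ ⟨hp, hz⟩)

end WeightedSums

theorem stmt_1_general {d : ℕ} (Ω : Set (EuclideanSpace ℝ (Fin d)))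
    (hΩc : IsCompact Ω)
    (X : (N : ℕ) → Fin N → EuclideanSpace ℝ (Fin d))
    (hX : ∀ N i, X N i ∈ Ω)
    (hunif : ∀ f : EuclideanSpace ℝ (Fin d) → ℝ, ContinuousOn f Ω →
      Tendsto (fun N : ℕ => ((volume Ω).toReal / N) * ∑ i : Fin N, f (X N i))
        atTop (nhds (∫ x in Ω, f x)))
    (κA κB κC : EuclideanSpace ℝ (Fin d) → EuclideanSpace ℝ (Fin d) → ℝ)
    (hκA : ContinuousOn
      (fun p : EuclideanSpace ℝ (Fin d) × EuclideanSpace ℝ (Fin d) => κA p.1 p.2) (Ω ×ˢ Ω))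
    (hκB : ContinuousOn
      (fun p : EuclideanSpace ℝ (Fin d) × EuclideanSpace ℝ (Fin d) => κB p.1 p.2) (Ω ×ˢ Ω))
    (hκC : ∀ x y, κC x y = ∫ z in Ω, κA x z * κB z y) :
    TendstoUniformlyOn
      (fun (N : ℕ) (p : EuclideanSpace ℝ (Fin d) × EuclideanSpace ℝ (Fin d)) =>
        ((volume Ω).toReal / N) * ∑ k : Fin N, κA p.1 (X N k) * κB (X N k) p.2)
      (fun p => κC p.1 p.2) atTop (Ω ×ˢ Ω) := by
  have hG : ContinuousOn (Function.uncurry fun p z ↦ κA p.1 z * κB z p.2) ((Ω ×ˢ Ω) ×ˢ Ω) :=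
    (hκA.comp (f := fun q : (_ × _) × _ ↦ (q.1.1, q.2)) (by fun_prop)
        fun _ hq ↦ ⟨hq.1.1, hq.2⟩).mul
      (hκB.comp (f := fun q : (_ × _) × _ ↦ (q.2, q.1.2)) (by fun_prop)
        fun _ hq ↦ ⟨hq.2, hq.1.2⟩)
  have hc (N : ℕ) : |(volume Ω).toReal / N| * N ≤ (volume Ω).toReal := by
    rw [abs_of_nonneg (by positivity)]
    rcases N.eq_zero_or_pos with rfl | hN
    · simp
    · rw [div_mul_cancel₀ _ (by positivity)]
  simpa only [hκC] using (hΩc.prod hΩc).tendstoUniformlyOn_mul_sum hΩc hG hc hX hunif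

theorem stmt_1 {d : ℕ} (Ω : Set (EuclideanSpace ℝ (Fin d)))
    (hΩc : IsCompact Ω) (hΩpos : 0 < (volume Ω).toReal)
    (X : (N : ℕ) → Fin N → EuclideanSpace ℝ (Fin d))
    (hX : ∀ N i, X N i ∈ Ω)
    (hunif : ∀ f : EuclideanSpace ℝ (Fin d) → ℝ, ContinuousOn f Ω →
      Tendsto (fun N : ℕ => ((volume Ω).toReal / N) * ∑ i : Fin N, f (X N i))
        atTop (nhds (∫ x in Ω, f x)))
    (κA κB κC : EuclideanSpace ℝ (Fin d) → EuclideanSpace ℝ (Fin d) → ℝ)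
    (hκA : ContinuousOn
      (fun p : EuclideanSpace ℝ (Fin d) × EuclideanSpace ℝ (Fin d) => κA p.1 p.2) (Ω ×ˢ Ω))
    (hκB : ContinuousOn
      (fun p : EuclideanSpace ℝ (Fin d) × EuclideanSpace ℝ (Fin d) => κB p.1 p.2) (Ω ×ˢ Ω))
    (hκC : ∀ x y, κC x y = ∫ z in Ω, κA x z * κB z y) :
    TendstoUniformlyOn
      (fun (N : ℕ) (p : EuclideanSpace ℝ (Fin d) × EuclideanSpace ℝ (Fin d)) =>
        ((volume Ω).toReal / N) * ∑ k : Fin N, κA p.1 (X N k) * κB (X N k) p.2)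
      (fun p => κC p.1 p.2) atTop (Ω ×ˢ Ω) :=
  stmt_1_general Ω hΩc X hX hunif κA κB κC hκA hκB hκC
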